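/- Fix an integer p ≥ 2 and work over ℚ: let t and D act on ℚⁿ by the same formulas. Then D^p − 1 restricts to a bijective linear map from the subspace {η ∈ ℚⁿ : η(1) = 0} onto the subspace {ξ ∈ ℚⁿ : ξ(n) = 0}: for every ξ ∈ ℚⁿ with ξ(n) = 0 there exists a unique η ∈ ℚⁿ with η(1) = 0 and (D^p − 1)η = ξ. -/

import Mathlib

/-!
`ℚⁿ` is the vector space of functions `Fin n → ℚ` (coordinates `1,…,n`
corresponding to indices `0,…,n-1`).  `shiftQ n` is the shift operator `t`,
`(tη)(i) = η(i+1)` for `i < n` and `(tη)(n) = 0`, and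
`DQ n = 1 + t + t² + … + t^{n−1}`.
-/

noncomputable section

/-- The shift operator `t` on `ℚⁿ`. -/
def shiftQ (n : ℕ) : Module.End ℚ (Fin n → ℚ) where
  toFun η i := if h : (i : ℕ) + 1 < n then η ⟨(i : ℕ) + 1, h⟩ else 0
  map_add' a b := by
    funext i
    by_cases h : (i : ℕ) + 1 < n <;> simp [h]
  map_smul' c a := by
    funext i
    by_cases h : (i : ℕ) + 1 < n <;> simp [h]

/-- The operator `D = 1 + t + t² + … + t^{n−1}` on `ℚⁿ`. -/
def DQ (n : ℕ) : Module.End ℚ (Fin n → ℚ) := ∑ i ∈ Finset.range n, shiftQ n ^ i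


/-!
Since `D (1 - t) = 1` we have `D - 1 = D t`, hence `D^p - 1 = S t` with
`S = (1 + D + ⋯ + D^{p-1}) D`. Being a polynomial in the nilpotent `t` with constant term `p`,
`S` is invertible over `ℚ`, and it commutes with `t`, so it permutes the range `{ξ(n) = 0}`
of `t`. As `t` maps `{η(1) = 0}` bijectively onto that range, so does `S t`.
-/

open Polynomial Set Function

theorem Polynomial.isUnit_aeval_of_isNilpotent {R A : Type*} [CommRing R] [Ring A] [Algebra R A]
    {x : A} (hx : IsNilpotent x) {q : R[X]} (hq : IsUnit (q.coeff 0)) : IsUnit (aeval x q) := by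
  have hcomm : Commute x (aeval x q.divX) := by
    simpa using (Commute.all X q.divX).map (aeval x)
  rw [← X_mul_divX_add q, map_add, map_mul, aeval_X, aeval_C, add_comm]
  exact (hcomm.isNilpotent_mul_right hx).isUnit_add_left_of_commute (hq.map _)
    (Algebra.commutes _ _).symm

theorem Function.Commute.bijOn_range {α : Type*} {f e : α → α} (h : Function.Commute f e)
    (he : Bijective e) : BijOn e (range f) (range f) :=
  ⟨h.mapsTo_range, he.injective.injOn, h.surjOn_range he.surjective⟩

theorem Set.BijOn.existsUnique_mem {α β : Type*} {f : α → β} {s : Set α} {t : Set β}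
    (h : BijOn f s t) {y : β} (hy : y ∈ t) : ∃! x, x ∈ s ∧ f x = y := by
  obtain ⟨x, hx, rfl⟩ := h.surjOn hy
  exact ⟨x, ⟨hx, rfl⟩, fun x' ⟨hx', he⟩ => h.injOn hx' hx he⟩

section Shift

variable {n : ℕ}

theorem shiftQ_apply (η : Fin n → ℚ) (i : Fin n) :
    shiftQ n η i = if h : (i : ℕ) + 1 < n then η ⟨(i : ℕ) + 1, h⟩ else 0 := rfl

theorem shiftQ_pow_apply (k : ℕ) (η : Fin n → ℚ) (i : Fin n) :
    (shiftQ n ^ k) η i = if h : (i : ℕ) + k < n then η ⟨(i : ℕ) + k, h⟩ else 0 := by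
  induction k generalizing η with
  | zero => simp
  | succ k ih =>
    rw [pow_succ, Module.End.mul_apply, ih]
    simp only [shiftQ_apply, ← add_assoc]
    split_ifs <;> first | rfl | omega

theorem shiftQ_pow_self : shiftQ n ^ n = 0 := by
  ext η i
  simp [shiftQ_pow_apply]

theorem isNilpotent_shiftQ : IsNilpotent (shiftQ n) := ⟨n, shiftQ_pow_self⟩

theorem range_shiftQ (hn : 0 < n) :
    range (shiftQ n) = {ξ : Fin n → ℚ | ξ ⟨n - 1, by omega⟩ = 0} := by
  ext ξ
  constructor
  · rintro ⟨η, rfl⟩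
    simp [shiftQ_apply, show ¬(n - 1 + 1 < n) by omega]
  · intro hξ
    refine ⟨fun i => if h : 0 < (i : ℕ) then ξ ⟨(i : ℕ) - 1, by omega⟩ else 0, ?_⟩
    funext i
    by_cases h : (i : ℕ) + 1 < n
    · simp [shiftQ_apply, h]
    · have : i = ⟨n - 1, by omega⟩ := Fin.ext (by simp; omega)
      simpa [shiftQ_apply, this, show ¬(n - 1 + 1 < n) by omega] using hξ.symm

theorem shiftQ_update_zero (hn : 0 < n) (η : Fin n → ℚ) (c : ℚ) :
    shiftQ n (Function.update η ⟨0, hn⟩ c) = shiftQ n η := by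
  funext i
  simp [shiftQ_apply, Function.update, Fin.ext_iff]

theorem injOn_shiftQ (hn : 0 < n) : InjOn (shiftQ n) {η | η ⟨0, hn⟩ = 0} := by
  intro η h0 η' h0' hT
  funext i
  rcases i with ⟨_ | i, hi⟩
  · exact h0.trans h0'.symm
  · simpa [shiftQ_apply, hi] using congrFun hT ⟨i, by omega⟩

theorem bijOn_shiftQ (hn : 0 < n) :
    BijOn (shiftQ n) {η | η ⟨0, hn⟩ = 0} (range (shiftQ n)) := by
  refine ⟨mapsTo_range _ _, injOn_shiftQ hn, ?_⟩
  rintro _ ⟨η, rfl⟩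
  exact ⟨Function.update η ⟨0, hn⟩ 0, by simp, shiftQ_update_zero hn η 0⟩

end Shift

theorem commute_DQ_shiftQ (n : ℕ) : Commute (DQ n) (shiftQ n) :=
  Commute.sum_left _ _ _ fun i _ => (Commute.refl _).pow_left i

theorem DQ_sub_one (n : ℕ) : DQ n - 1 = DQ n * shiftQ n := by
  have h := geom_sum_mul (shiftQ n) n
  rw [shiftQ_pow_self, mul_sub, mul_one] at h
  change DQ n * shiftQ n - DQ n = 0 - 1 at h
  rw [zero_sub, sub_eq_iff_eq_add] at h
  rw [h, neg_add_eq_sub]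

theorem DQ_pow_sub_one (n p : ℕ) :
    DQ n ^ p - 1 = ((∑ k ∈ Finset.range p, DQ n ^ k) * DQ n) * shiftQ n := by
  rw [← geom_sum_mul, DQ_sub_one, mul_assoc]

theorem aeval_geom_sum_X_shiftQ (n : ℕ) :
    aeval (shiftQ n) (∑ i ∈ Finset.range n, X ^ i : ℚ[X]) = DQ n := by
  simp [DQ]

theorem isUnit_geom_sum_DQ_mul_DQ {n p : ℕ} (hn : 0 < n) (hp : p ≠ 0) :
    IsUnit ((∑ k ∈ Finset.range p, DQ n ^ k) * DQ n) := by
  set d : ℚ[X] := ∑ i ∈ Finset.range n, X ^ i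
  have hD : aeval (shiftQ n) d = DQ n := aeval_geom_sum_X_shiftQ n
  have hd : d.eval 0 = 1 := by simp [d, eval_finsetSum, hn.ne']
  have hq : IsUnit (((∑ k ∈ Finset.range p, d ^ k) * d).coeff 0) := by
    simp [coeff_zero_eq_eval_zero, eval_finsetSum, hd, hp]
  simpa only [map_mul, map_sum, map_pow, hD] using
    isUnit_aeval_of_isNilpotent (isNilpotent_shiftQ (n := n)) hq

/-- For `p ≥ 2`, the operator `D^p − 1` on `ℚⁿ` restricts to a bijection from the
subspace `{η : η(1) = 0}` onto the subspace `{ξ : ξ(n) = 0}`: it maps the former into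
the latter, and for every `ξ` with `ξ(n) = 0` there is a unique `η` with `η(1) = 0`
and `(D^p − 1)η = ξ`. -/
theorem Dpow_sub_one_bijective_rational (n : ℕ) (hn : 2 ≤ n) (p : ℕ) (hp : 2 ≤ p) :
    (∀ η : Fin n → ℚ, η ⟨0, by omega⟩ = 0 →
        ((DQ n ^ p - 1) η) ⟨n - 1, by omega⟩ = 0) ∧
    (∀ ξ : Fin n → ℚ, ξ ⟨n - 1, by omega⟩ = 0 →
        ∃! η : Fin n → ℚ, η ⟨0, by omega⟩ = 0 ∧ (DQ n ^ p - 1) η = ξ) := by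
  set S : Module.End ℚ (Fin n → ℚ) := (∑ k ∈ Finset.range p, DQ n ^ k) * DQ n
  have hS : Bijective S :=
    (Module.End.isUnit_iff S).1 (isUnit_geom_sum_DQ_mul_DQ (by omega) (by omega))
  have hcomm : Function.Commute (shiftQ n) S := LinearMap.congr_fun
    ((Commute.sum_left _ _ _ fun k _ => (commute_DQ_shiftQ n).pow_left k).mul_left
      (commute_DQ_shiftQ n)).symm.eq
  have hbij : BijOn ⇑(DQ n ^ p - 1) {η : Fin n → ℚ | η ⟨0, by omega⟩ = 0}
      {ξ : Fin n → ℚ | ξ ⟨n - 1, by omega⟩ = 0} := by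
    rw [DQ_pow_sub_one, ← range_shiftQ (by omega), Module.End.mul_eq_comp, LinearMap.coe_comp]
    exact (hcomm.bijOn_range hS).comp (bijOn_shiftQ _)
  exact ⟨fun η hη => hbij.mapsTo hη, fun ξ hξ => hbij.existsUnique_mem hξ⟩
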